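/- arXiv:1703.01600 — 5 statements merged into one kernel-verified Lean document; each statement's English description precedes it below -/
import Mathlib

section
/- Let a < b be real numbers, let F : ℝ → ℂ be continuously differentiable on the interval I = [a, b], let 0 < λ ≤ b − a, and let p, p' ∈ (1, ∞) satisfy 1/p + 1/p' = 1. Then sup_{t ∈ I} |F(t)| ≤ λ^{−1/p} (∫_I |F(t)|^p dt)^{1/p} + λ^{1/p'} (∫_I |F'(t)|^p dt)^{1/p}. -/
open MeasureTheory Set

/-
Around any point `t` of `[a, b]` place a subinterval `J` of length `λ`. For `s ∈ J` the
fundamental theorem of calculus gives `|F t| ≤ |F s| + ∫_J |F'|`; averaging over `s ∈ J` yields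
`|F t| ≤ λ⁻¹ ∫_J |F| + ∫_J |F'|`, and Hölder's inequality against the constant `1` on `J` turns
each `∫_J |h|` into at most `λ^{1/p'} (∫_I |h|^p)^{1/p}`.
-/

theorem exists_Icc_add_subset_Icc_of_mem {a b t lam : ℝ} (ht : t ∈ Icc a b) (hlam : 0 ≤ lam)
    (hlam_le : lam ≤ b - a) : ∃ c, a ≤ c ∧ c + lam ≤ b ∧ t ∈ Icc c (c + lam) := by
  refine ⟨min t (b - lam), le_min ht.1 (by linarith), by linarith [min_le_right t (b - lam)],
    min_le_left _ _, ?_⟩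
  rcases le_total t (b - lam) with h | h
  · rw [min_eq_left h]; linarith
  · rw [min_eq_right h]; linarith [ht.2]

theorem intervalIntegral_derivWithin_Icc_eq {E F : Type*} [NormedAddCommGroup E]
    [NormedSpace ℝ E] [NormedAddCommGroup F] [NormedSpace ℝ F] {a b : ℝ} (hab : a ≤ b)
    (f : ℝ → E) (h : E → F) :
    ∫ x in a..b, h (derivWithin f (Icc a b) x) = ∫ x in a..b, h (deriv f x) := by
  simp only [intervalIntegral.integral_of_le hab, integral_Ioc_eq_integral_Ioo]
  exact setIntegral_congr_fun measurableSet_Ioo fun x hx => by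
    rw [derivWithin_of_mem_nhds (Icc_mem_nhds hx.1 hx.2)]

theorem DifferentiableOn.hasDerivAt_derivWithin_Icc {E : Type*} [NormedAddCommGroup E]
    [NormedSpace ℝ E] {f : ℝ → E} {a b x : ℝ} (hf : DifferentiableOn ℝ f (Icc a b))
    (hx : x ∈ Ioo a b) : HasDerivAt f (derivWithin f (Icc a b) x) x := by
  have hx_nhds : Icc a b ∈ nhds x := Icc_mem_nhds hx.1 hx.2
  rw [derivWithin_of_mem_nhds hx_nhds]
  exact (hf.differentiableAt hx_nhds).hasDerivAt

section Holder

variable {E : Type*} [NormedAddCommGroup E] {f : ℝ → E} {p q : ℝ}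

theorem intervalIntegral_norm_le_rpow_mul_integral_norm_rpow {c d : ℝ} (hcd : c ≤ d)
    (hpq : p.HolderConjugate q) (hf : ContinuousOn f (Icc c d)) :
    ∫ x in c..d, ‖f x‖ ≤ (d - c) ^ (1 / q) * (∫ x in c..d, ‖f x‖ ^ p) ^ (1 / p) := by
  have : IsFiniteMeasure (volume.restrict (Ioc c d)) := by
    rw [isFiniteMeasure_restrict]; exact measure_Ioc_lt_top.ne
  obtain ⟨M, hM⟩ := isCompact_Icc.exists_bound_of_continuousOn hf.norm
  have hf_memLp : MemLp (fun x => ‖f x‖) (ENNReal.ofReal p) (volume.restrict (Ioc c d)) :=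
    MemLp.of_bound ((hf.norm.mono Ioc_subset_Icc_self).aestronglyMeasurable measurableSet_Ioc) M
      ((ae_restrict_mem measurableSet_Ioc).mono fun x hx => hM x (Ioc_subset_Icc_self hx))
  have holder := integral_mul_le_Lp_mul_Lq_of_nonneg hpq (ae_of_all _ fun x => norm_nonneg (f x))
    (ae_of_all _ fun _ => zero_le_one) hf_memLp (memLp_const 1)
  simp only [mul_one, Real.one_rpow, setIntegral_const, Real.volume_real_Ioc_of_le hcd,
    smul_eq_mul] at holder
  simp only [intervalIntegral.integral_of_le hcd]
  linarith

theorem intervalIntegral_norm_le_rpow_mul_integral_norm_rpow_of_le {a b c d : ℝ} (hac : a ≤ c)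
    (hcd : c ≤ d) (hdb : d ≤ b) (hpq : p.HolderConjugate q) (hf : ContinuousOn f (Icc a b)) :
    ∫ x in c..d, ‖f x‖ ≤ (d - c) ^ (1 / q) * (∫ x in a..b, ‖f x‖ ^ p) ^ (1 / p) := by
  have hf_rpow : IntervalIntegrable (fun x => ‖f x‖ ^ p) volume a b :=
    (hf.norm.rpow_const fun _ _ => Or.inr hpq.nonneg).intervalIntegrable_of_Icc
      (hac.trans (hcd.trans hdb))
  calc ∫ x in c..d, ‖f x‖
      ≤ (d - c) ^ (1 / q) * (∫ x in c..d, ‖f x‖ ^ p) ^ (1 / p) :=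
        intervalIntegral_norm_le_rpow_mul_integral_norm_rpow hcd hpq
          (hf.mono (Icc_subset_Icc hac hdb))
    _ ≤ (d - c) ^ (1 / q) * (∫ x in a..b, ‖f x‖ ^ p) ^ (1 / p) := by
        have hnonneg : ∀ x, 0 ≤ ‖f x‖ ^ p := fun x => by positivity
        refine mul_le_mul_of_nonneg_left (Real.rpow_le_rpow ?_ ?_ (one_div_nonneg.2 hpq.nonneg))
          (Real.rpow_nonneg (sub_nonneg.2 hcd) _)
        · exact intervalIntegral.integral_nonneg hcd fun x _ => hnonneg x
        · exact intervalIntegral.integral_mono_interval hac hcd hdb (ae_of_all _ hnonneg) hf_rpow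

end Holder

section SupBound

variable {E : Type*} [NormedAddCommGroup E] [NormedSpace ℝ E] [CompleteSpace E]
  {f f' : ℝ → E} {c d s t : ℝ}

theorem norm_sub_le_integral_norm_of_hasDerivAt (hf : ContinuousOn f (Icc c d))
    (hderiv : ∀ x ∈ Ioo c d, HasDerivAt f (f' x) x) (hf' : IntervalIntegrable f' volume c d)
    (hs : s ∈ Icc c d) (ht : t ∈ Icc c d) : ‖f t - f s‖ ≤ ∫ x in c..d, ‖f' x‖ := by
  wlog hst : s ≤ t generalizing s t
  · rw [norm_sub_rev]; exact this ht hs (le_of_not_ge hst)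
  rw [← intervalIntegral.integral_eq_sub_of_hasDerivAt_of_le hst
    (hf.mono (Icc_subset_Icc hs.1 ht.2))
    (fun x hx => hderiv x ⟨hs.1.trans_lt hx.1, hx.2.trans_le ht.2⟩)
    (hf'.mono_set (by
      rw [uIcc_of_le hst, uIcc_of_le (hs.1.trans hs.2)]; exact Icc_subset_Icc hs.1 ht.2))]
  exact (intervalIntegral.norm_integral_le_integral_norm hst).trans
    (intervalIntegral.integral_mono_interval hs.1 hst ht.2 (ae_of_all _ fun _ => norm_nonneg _)
      hf'.norm)

theorem norm_le_inv_mul_integral_norm_add_integral_norm_deriv (hcd : c < d)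
    (hf : ContinuousOn f (Icc c d)) (hderiv : ∀ x ∈ Ioo c d, HasDerivAt f (f' x) x)
    (hf' : IntervalIntegrable f' volume c d) (ht : t ∈ Icc c d) :
    ‖f t‖ ≤ (d - c)⁻¹ * (∫ x in c..d, ‖f x‖) + ∫ x in c..d, ‖f' x‖ := by
  set K := ∫ x in c..d, ‖f' x‖
  have hf_norm : IntervalIntegrable (fun x => ‖f x‖) volume c d :=
    hf.norm.intervalIntegrable_of_Icc hcd.le
  have hpointwise : ∀ s ∈ Icc c d, ‖f t‖ ≤ ‖f s‖ + K := fun s hs =>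
    (norm_le_norm_add_norm_sub' (f t) (f s)).trans
      (add_le_add le_rfl (norm_sub_le_integral_norm_of_hasDerivAt hf hderiv hf' hs ht))
  have haverage : (d - c) * ‖f t‖ ≤ (∫ x in c..d, ‖f x‖) + (d - c) * K := by
    have := intervalIntegral.integral_mono_on hcd.le intervalIntegrable_const
      (hf_norm.add intervalIntegrable_const) hpointwise
    simpa only [intervalIntegral.integral_const, intervalIntegral.integral_add hf_norm
      intervalIntegrable_const, smul_eq_mul] using this
  have hlen : 0 < d - c := sub_pos.2 hcd
  calc ‖f t‖ = (d - c)⁻¹ * ((d - c) * ‖f t‖) := by field_simp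
    _ ≤ (d - c)⁻¹ * ((∫ x in c..d, ‖f x‖) + (d - c) * K) := by gcongr
    _ = (d - c)⁻¹ * (∫ x in c..d, ‖f x‖) + K := by field_simp

end SupBound

theorem oscillating_dunkl_lemma_2_5_general
    (a b : ℝ) (hab : a < b) (F : ℝ → ℂ)
    (hF : ContDiffOn ℝ 1 F (Icc a b))
    (lam p p' : ℝ) (hlam_pos : 0 < lam) (hlam_le : lam ≤ b - a)
    (hp : 1 < p) (hpp' : 1 / p + 1 / p' = 1) :
    ∀ t ∈ Icc a b,
      ‖F t‖ ≤ lam ^ (-(1 / p)) * (∫ t in a..b, ‖F t‖ ^ p) ^ (1 / p)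
        + lam ^ (1 / p') * (∫ t in a..b, ‖deriv F t‖ ^ p) ^ (1 / p) := by
  intro t ht
  have hpq : p.HolderConjugate p' :=
    Real.holderConjugate_iff.mpr ⟨hp, by simpa only [one_div] using hpp'⟩
  obtain ⟨c, hac, hdb, htc⟩ := exists_Icc_add_subset_Icc_of_mem ht hlam_pos.le hlam_le
  have hJ : Icc c (c + lam) ⊆ Icc a b := Icc_subset_Icc hac hdb
  have hc_lt : c < c + lam := by linarith
  -- `deriv F` may be discontinuous at `a` and `b`; the one-sided derivative is not.
  set G := derivWithin F (Icc a b)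
  have hG : ContinuousOn G (Icc a b) :=
    hF.continuousOn_derivWithin (uniqueDiffOn_Icc hab) le_rfl
  have hFG : ∀ x ∈ Ioo c (c + lam), HasDerivAt F (G x) x := fun x hx =>
    (hF.differentiableOn one_ne_zero).hasDerivAt_derivWithin_Icc
      ⟨hac.trans_lt hx.1, hx.2.trans_le hdb⟩
  have hpow : lam⁻¹ * lam ^ (1 / p') = lam ^ (-(1 / p)) := by
    rw [← Real.rpow_neg_one lam, ← Real.rpow_add hlam_pos]
    congr 1
    linarith
  have hJ_len : c + lam - c = lam := add_sub_cancel_left c lam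
  calc ‖F t‖ ≤ lam⁻¹ * (∫ x in c..c + lam, ‖F x‖) + ∫ x in c..c + lam, ‖G x‖ := by
        simpa only [hJ_len] using norm_le_inv_mul_integral_norm_add_integral_norm_deriv
          hc_lt (hF.continuousOn.mono hJ) hFG ((hG.mono hJ).intervalIntegrable_of_Icc hc_lt.le) htc
    _ ≤ lam⁻¹ * (lam ^ (1 / p') * (∫ x in a..b, ‖F x‖ ^ p) ^ (1 / p))
        + lam ^ (1 / p') * (∫ x in a..b, ‖G x‖ ^ p) ^ (1 / p) := by
        gcongr
        · simpa only [hJ_len] using intervalIntegral_norm_le_rpow_mul_integral_norm_rpow_of_le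
            hac hc_lt.le hdb hpq hF.continuousOn
        · simpa only [hJ_len] using intervalIntegral_norm_le_rpow_mul_integral_norm_rpow_of_le
            hac hc_lt.le hdb hpq hG
    _ = _ := by
        rw [← mul_assoc, hpow, intervalIntegral_derivWithin_Icc_eq hab.le F fun z => ‖z‖ ^ p]

/-- Lemma 2.5: for `F` continuously differentiable on `I = [a,b]`,
`0 < λ ≤ b - a` and conjugate exponents `p, p' ∈ (1,∞)`,
`sup_I |F| ≤ λ^{-1/p} (∫_I |F|^p)^{1/p} + λ^{1/p'} (∫_I |F'|^p)^{1/p}`. -/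
theorem oscillating_dunkl_lemma_2_5
    (a b : ℝ) (hab : a < b) (F : ℝ → ℂ)
    (hF : ContDiffOn ℝ 1 F (Icc a b))
    (lam p p' : ℝ) (hlam_pos : 0 < lam) (hlam_le : lam ≤ b - a)
    (hp : 1 < p) (hp' : 1 < p') (hpp' : 1 / p + 1 / p' = 1) :
    ∀ t ∈ Icc a b,
      ‖F t‖ ≤ lam ^ (-(1 / p)) * (∫ t in a..b, ‖F t‖ ^ p) ^ (1 / p)
        + lam ^ (1 / p') * (∫ t in a..b, ‖deriv F t‖ ^ p) ^ (1 / p) :=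
  oscillating_dunkl_lemma_2_5_general a b hab F hF lam p p' hlam_pos hlam_le hp hpp'
end

section
/- Let β ∈ (−1, 0) and ε ∈ {1, −1}. The function G(t) = ∫₀^t s^{β} e^{i ε s} ds is continuous on [0, ∞) and bounded: there exists C > 0 such that |G(t)| ≤ C for all t ≥ 0. -/
open MeasureTheory Set

/-! Near `0` the integrand is dominated by `s ^ β`, which is integrable because `β > -1`; this gives
continuity and a bound `1 / (β + 1)` on `[0, 1]`. On `[1, t]`, integrate by parts against the
primitive `e^{iεs} / (iε)`: both boundary terms are at most `1 / |ε|` because `s ^ β ≤ 1`, and the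
remaining integral of `|β| s ^ (β - 1) / |ε|` is `(1 - t ^ β) / |ε| ≤ 1 / |ε|` because `β < 0`. -/

lemma integral_abs_deriv_rpow_le_one {β t : ℝ} (hβ : β < 0) (ht : 1 ≤ t) :
    ∫ s in (1 : ℝ)..t, |β * s ^ (β - 1)| ≤ 1 := by
  have h0 : (0 : ℝ) ∉ uIcc 1 t := fun h ↦ by rw [uIcc_of_le ht] at h; linarith [h.1]
  calc ∫ s in (1 : ℝ)..t, |β * s ^ (β - 1)|
      = ∫ s in (1 : ℝ)..t, -β * s ^ (β - 1) := intervalIntegral.integral_congr fun s hs ↦ by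
        have hs₀ : 0 ≤ s := by rw [uIcc_of_le ht] at hs; linarith [hs.1]
        rw [abs_of_nonpos (mul_nonpos_of_nonpos_of_nonneg hβ.le (Real.rpow_nonneg hs₀ _))]
        ring
    _ = 1 - t ^ β := by
        rw [intervalIntegral.integral_const_mul, integral_rpow (Or.inr ⟨by linarith, h0⟩),
          sub_add_cancel, Real.one_rpow, neg_mul, mul_div_cancel₀ _ hβ.ne, neg_sub]
    _ ≤ 1 := by linarith [Real.rpow_nonneg (by linarith : (0 : ℝ) ≤ t) β]

open Complex in
noncomputable def oscillatoryIntegrand (β ε s : ℝ) : ℂ :=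
  ((s ^ β : ℝ) : ℂ) * exp (I * ((ε * s : ℝ) : ℂ))

namespace OscillatoryIntegrand

open Complex

variable {β ε : ℝ}

lemma norm_eq (β ε : ℝ) {s : ℝ} (hs : 0 ≤ s) : ‖oscillatoryIntegrand β ε s‖ = s ^ β := by
  rw [oscillatoryIntegrand, norm_mul, norm_exp_I_mul_ofReal, mul_one, norm_real,
    Real.norm_of_nonneg (Real.rpow_nonneg hs β)]

lemma continuous_exp_I_mul (ε : ℝ) : Continuous fun s : ℝ ↦ exp (I * ((ε * s : ℝ) : ℂ)) := by
  fun_prop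

lemma intervalIntegrable (hβ : -1 < β) (ε a b : ℝ) :
    IntervalIntegrable (oscillatoryIntegrand β ε) volume a b := by
  have h := intervalIntegral.intervalIntegrable_rpow' hβ (a := a) (b := b)
  exact IntervalIntegrable.mul_continuousOn ⟨h.1.ofReal, h.2.ofReal⟩
    (continuous_exp_I_mul ε).continuousOn

lemma continuous_primitive (hβ : -1 < β) (ε : ℝ) :
    Continuous fun t ↦ ∫ s in (0 : ℝ)..t, oscillatoryIntegrand β ε s :=
  intervalIntegral.continuous_primitive (intervalIntegrable hβ ε) 0

lemma norm_primitive_le_of_le_one (hβ : -1 < β) (ε : ℝ) {t : ℝ} (ht₀ : 0 ≤ t) (ht₁ : t ≤ 1) :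
    ‖∫ s in (0 : ℝ)..t, oscillatoryIntegrand β ε s‖ ≤ 1 / (β + 1) := by
  have hβ₁ : 0 < β + 1 := by linarith
  calc ‖∫ s in (0 : ℝ)..t, oscillatoryIntegrand β ε s‖
      ≤ ∫ s in (0 : ℝ)..t, ‖oscillatoryIntegrand β ε s‖ :=
        intervalIntegral.norm_integral_le_integral_norm ht₀
    _ = ∫ s in (0 : ℝ)..t, s ^ β :=
        intervalIntegral.integral_congr fun s hs ↦ norm_eq β ε (uIcc_of_le ht₀ ▸ hs).1
    _ = t ^ (β + 1) / (β + 1) := by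
        rw [integral_rpow (Or.inl hβ), Real.zero_rpow hβ₁.ne', sub_zero]
    _ ≤ 1 / (β + 1) := by gcongr; exact Real.rpow_le_one ht₀ ht₁ hβ₁.le

lemma hasDerivAt_exp_I_mul_div (hε : ε ≠ 0) (s : ℝ) :
    HasDerivAt (fun s : ℝ ↦ exp (I * ((ε * s : ℝ) : ℂ)) / (I * ε))
      (exp (I * ((ε * s : ℝ) : ℂ))) s := by
  have hIε : I * (ε : ℂ) ≠ 0 := mul_ne_zero I_ne_zero (ofReal_ne_zero.mpr hε)
  have h := (((hasDerivAt_mul_const ε).ofReal_comp.const_mul I).cexp.div_const (I * ε) :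
    HasDerivAt (fun s : ℝ ↦ exp (I * ((s * ε : ℝ) : ℂ)) / (I * ε)) _ s)
  simpa only [mul_comm _ ε, ofReal_mul, mul_div_cancel_right₀ _ hIε] using h

lemma norm_integral_one_le (hβ : β < 0) (hε : ε ≠ 0) {t : ℝ} (ht : 1 ≤ t) :
    ‖∫ s in (1 : ℝ)..t, oscillatoryIntegrand β ε s‖ ≤ 3 / |ε| := by
  set v : ℝ → ℂ := fun s ↦ exp (I * ((ε * s : ℝ) : ℂ)) / (I * ε)
  have hpos : ∀ s ∈ uIcc 1 t, 1 ≤ s := fun s hs ↦ (uIcc_of_le ht ▸ hs).1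
  have hv : ∀ s, ‖v s‖ = 1 / |ε| := fun s ↦ by
    rw [norm_div, norm_exp_I_mul_ofReal, norm_mul, norm_I, one_mul, norm_real, Real.norm_eq_abs]
  have hu : ∀ s ∈ uIcc 1 t,
      HasDerivAt (fun s : ℝ ↦ ((s ^ β : ℝ) : ℂ)) ((β * s ^ (β - 1) : ℝ) : ℂ) s := fun s hs ↦
    (Real.hasDerivAt_rpow_const (Or.inl (by linarith [hpos s hs]))).ofReal_comp
  have hu' : IntervalIntegrable (fun s : ℝ ↦ ((β * s ^ (β - 1) : ℝ) : ℂ)) volume 1 t :=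
    (continuous_ofReal.comp_continuousOn (continuousOn_const.mul
      (continuousOn_id.rpow_const fun s hs ↦
        Or.inl (zero_lt_one.trans_le (hpos s hs)).ne'))).intervalIntegrable
  have ibp := intervalIntegral.integral_mul_deriv_eq_deriv_mul hu
    (fun s _ ↦ hasDerivAt_exp_I_mul_div hε s) hu' ((continuous_exp_I_mul ε).intervalIntegrable _ _)
  have hboundary : ∀ s, 1 ≤ s → ‖((s ^ β : ℝ) : ℂ) * v s‖ ≤ 1 / |ε| := fun s hs ↦ by
    rw [norm_mul, hv, norm_real, Real.norm_of_nonneg (Real.rpow_nonneg (by linarith) β)]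
    exact mul_le_of_le_one_left (by positivity) (Real.rpow_le_one_of_one_le_of_nonpos hs hβ.le)
  have hremainder : ‖∫ s in (1 : ℝ)..t, ((β * s ^ (β - 1) : ℝ) : ℂ) * v s‖ ≤ 1 / |ε| :=
    calc ‖∫ s in (1 : ℝ)..t, ((β * s ^ (β - 1) : ℝ) : ℂ) * v s‖
        ≤ ∫ s in (1 : ℝ)..t, ‖((β * s ^ (β - 1) : ℝ) : ℂ) * v s‖ :=
          intervalIntegral.norm_integral_le_integral_norm ht
      _ = (∫ s in (1 : ℝ)..t, |β * s ^ (β - 1)|) * (1 / |ε|) := by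
          rw [← intervalIntegral.integral_mul_const]
          simp only [norm_mul, hv, norm_real, Real.norm_eq_abs, abs_mul]
      _ ≤ 1 / |ε| := mul_le_of_le_one_left (by positivity) (integral_abs_deriv_rpow_le_one hβ ht)
  unfold oscillatoryIntegrand
  rw [ibp]
  calc _ ≤ ‖((t ^ β : ℝ) : ℂ) * v t‖ + ‖((1 ^ β : ℝ) : ℂ) * v 1‖
        + ‖∫ s in (1 : ℝ)..t, ((β * s ^ (β - 1) : ℝ) : ℂ) * v s‖ :=
          (norm_sub_le _ _).trans (add_le_add_left (norm_sub_le _ _) _)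
    _ ≤ 1 / |ε| + 1 / |ε| + 1 / |ε| :=
        add_le_add (add_le_add (hboundary t ht) (hboundary 1 le_rfl)) hremainder
    _ = 3 / |ε| := by ring

lemma norm_primitive_le (hβ : β ∈ Ioo (-1) 0) (hε : ε ≠ 0) {t : ℝ} (ht : 0 ≤ t) :
    ‖∫ s in (0 : ℝ)..t, oscillatoryIntegrand β ε s‖ ≤ 1 / (β + 1) + 3 / |ε| := by
  rcases le_total t 1 with ht₁ | ht₁
  · have : 0 ≤ 3 / |ε| := by positivity
    linarith [norm_primitive_le_of_le_one hβ.1 ε ht ht₁]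
  · rw [← intervalIntegral.integral_add_adjacent_intervals (intervalIntegrable hβ.1 ε 0 1)
      (intervalIntegrable hβ.1 ε 1 t)]
    exact (norm_add_le _ _).trans (add_le_add
      (norm_primitive_le_of_le_one hβ.1 ε zero_le_one le_rfl) (norm_integral_one_le hβ.2 hε ht₁))

end OscillatoryIntegrand

/-- Lemma 2.2 (the function `G`): for `β ∈ (-1,0)` and `ε = ±1`, the function
`G(t) = ∫₀^t s^β e^{iεs} ds` is continuous on `[0,∞)` and bounded there. -/
theorem oscillating_dunkl_lemma_2_2_G
    (β : ℝ) (hβ : β ∈ Ioo (-1 : ℝ) 0) (ε : ℝ) (hε : ε = 1 ∨ ε = -1)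
    (G : ℝ → ℂ)
    (hG : ∀ t : ℝ, G t = ∫ s in (0:ℝ)..t,
        ((s ^ β : ℝ) : ℂ) * Complex.exp (Complex.I * ((ε * s : ℝ) : ℂ))) :
    ContinuousOn G (Ici 0) ∧ ∃ C : ℝ, 0 < C ∧ ∀ t : ℝ, 0 ≤ t → ‖G t‖ ≤ C := by
  have hε₀ : ε ≠ 0 := by rcases hε with rfl | rfl <;> norm_num
  obtain rfl : G = fun t ↦ ∫ s in (0 : ℝ)..t, oscillatoryIntegrand β ε s := funext hG
  have hβ₁ : 0 < β + 1 := by linarith [hβ.1]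
  exact ⟨(OscillatoryIntegrand.continuous_primitive hβ.1 ε).continuousOn,
    1 / (β + 1) + 3 / |ε|, by positivity, fun t ht ↦ OscillatoryIntegrand.norm_primitive_le hβ hε₀ ht⟩
end

section
/- Let ψ : ℝ → ℝ be a C^∞ function with support contained in [1/2, 2], let β ∈ (−1, 0), and let ε ∈ {1, −1}. The function H(t) = t^{β+1} ∫₀^∞ ψ(s) s^{β} e^{i ε t s} ds is continuous and bounded on (0, ∞), and lim_{t→∞} H(t) = 0. -/
open MeasureTheory Set Filter

open FourierTransform Real Complex in
/-- Lemma 2.2 (the function `H`) together with the limit from its proof: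
for `ψ` smooth with support in `[1/2,2]`, `β ∈ (-1,0)` and `ε = ±1`, the
function `H(t) = t^{β+1} ∫₀^∞ ψ(s) s^β e^{iεts} ds` is continuous and bounded
on `(0,∞)`, and `H(t) → 0` as `t → ∞`. -/
theorem oscillating_dunkl_lemma_2_2_H
    (ψ : ℝ → ℝ) (hψ : ContDiff ℝ (⊤ : ℕ∞) ψ)
    (hsupp : Function.support ψ ⊆ Icc (1/2 : ℝ) 2)
    (β : ℝ) (hβ : β ∈ Ioo (-1 : ℝ) 0) (ε : ℝ) (hε : ε = 1 ∨ ε = -1)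
    (H : ℝ → ℂ)
    (hH : ∀ t : ℝ, H t = ((t ^ (β + 1) : ℝ) : ℂ) *
        ∫ s in Ioi (0:ℝ),
          ((ψ s * s ^ β : ℝ) : ℂ) * Complex.exp (Complex.I * ((ε * t * s : ℝ) : ℂ))) :
    ContinuousOn H (Ioi 0) ∧ (∃ C : ℝ, 0 < C ∧ ∀ t : ℝ, 0 < t → ‖H t‖ ≤ C) ∧
      Tendsto H atTop (nhds 0) := by
  have hεabs : |ε| = 1 := by rcases hε with h | h <;> simp [h]
  set g : ℝ → ℂ := fun s => ((ψ s * s ^ β : ℝ) : ℂ) with hg_def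
  -- g vanishes off [1/2, 2]
  have hg0 : ∀ s, s ∉ Icc (1/2:ℝ) 2 → g s = 0 := by
    intro s hs
    have : ψ s = 0 := by
      by_contra hc
      exact hs (hsupp hc)
    simp [hg_def, this]
  -- g is smooth
  have hgsmooth : ContDiff ℝ (⊤ : ℕ∞) g := by
    have hf : ContDiff ℝ (⊤ : ℕ∞) (fun s : ℝ => ψ s * s ^ β) := by
      rw [contDiff_iff_contDiffAt]
      intro s
      rcases lt_or_ge s (1/2) with h | h
      · have : (fun s : ℝ => ψ s * s ^ β) =ᶠ[nhds s] fun _ => 0 := by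
          filter_upwards [Iio_mem_nhds h] with x hx
          have : ψ x = 0 := by
            by_contra hc
            exact absurd ((hsupp hc).1) (not_le.mpr hx)
          simp [this]
        exact (contDiffAt_const (c := (0:ℝ))).congr_of_eventuallyEq this
      · have hs : s ≠ 0 := by positivity
        exact hψ.contDiffAt.mul (Real.contDiffAt_rpow_const_of_ne hs)
    exact Complex.ofRealCLM.contDiff.comp hf
  have hcs : HasCompactSupport g :=
    HasCompactSupport.intro isCompact_Icc hg0
  have hgc : Continuous g := hgsmooth.continuous
  have hgi : Integrable g := hgc.integrable_of_hasCompactSupport hcs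
  have hdiff : Differentiable ℝ g := hgsmooth.differentiable (by simp)
  have hgc' : Continuous (deriv g) := hgsmooth.continuous_deriv (by simp)
  have hgi' : Integrable (deriv g) :=
    hgc'.integrable_of_hasCompactSupport hcs.deriv
  -- rewrite H via the Fourier transform of g
  have key : ∀ t : ℝ, H t = ((t ^ (β + 1) : ℝ) : ℂ) * 𝓕 g (-(ε*t)/(2*π)) := by
    intro t
    rw [hH t]
    congr 1
    rw [MeasureTheory.setIntegral_eq_integral_of_forall_compl_eq_zero
        (fun s hs => by
          rw [show ((ψ s * s ^ β : ℝ) : ℂ) = g s from rfl,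
            hg0 s (fun h => hs (lt_of_lt_of_le (by norm_num) h.1)), zero_mul])]
    rw [Real.fourier_real_eq_integral_exp_smul]
    congr 1 with s
    rw [smul_eq_mul, mul_comm]
    congr 2
    push_cast
    have hπ : (π:ℂ) ≠ 0 := Complex.ofReal_ne_zero.mpr Real.pi_ne_zero
    field_simp
  -- uniform bound of the Fourier transform
  set A : ℝ := ∫ x, ‖g x‖ with hA_def
  have hA : 0 ≤ A := integral_nonneg fun x => norm_nonneg _
  have hFA : ∀ w : ℝ, ‖𝓕 g w‖ ≤ A := fun w =>
    VectorFourier.norm_fourierIntegral_le_integral_norm _ _ _ _ _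
  -- decay of the Fourier transform
  set M : ℝ := ∫ x, ‖deriv g x‖ with hM_def
  have hM0 : 0 ≤ M := integral_nonneg fun x => norm_nonneg _
  have hdecay : ∀ t : ℝ, 0 < t → ‖𝓕 g (-(ε*t)/(2*π))‖ ≤ M / t := by
    intro t ht
    have hd := congrFun (Real.fourier_deriv hgi hdiff hgi') (-(ε*t)/(2*π))
    have hM : ‖𝓕 (deriv g) (-(ε*t)/(2*π))‖ ≤ M :=
      VectorFourier.norm_fourierIntegral_le_integral_norm _ _ _ _ _
    rw [hd] at hM
    rw [smul_eq_mul, norm_mul] at hM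
    have hx : ‖(2 * ↑π * Complex.I * ((-(ε*t)/(2*π) : ℝ) : ℂ))‖ = t := by
      simp only [norm_mul, Complex.norm_I, Complex.norm_real, Real.norm_eq_abs,
        Complex.norm_ofNat]
      rw [abs_of_pos Real.pi_pos, abs_div, abs_neg, abs_mul, hεabs, one_mul,
        abs_of_pos ht, abs_of_pos (by positivity : (0:ℝ) < 2*π)]
      field_simp
    rw [hx] at hM
    rw [le_div_iff₀ ht]
    linarith [hM]
  -- norm of H
  have hHnorm : ∀ t : ℝ, 0 < t → ‖H t‖ = t ^ (β+1) * ‖𝓕 g (-(ε*t)/(2*π))‖ := by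
    intro t ht
    rw [key t, norm_mul, Complex.norm_real, Real.norm_eq_abs,
      abs_of_pos (Real.rpow_pos_of_pos ht _)]
  -- bound for t ≥ 1
  have hbig : ∀ t : ℝ, 1 ≤ t → ‖H t‖ ≤ M * t ^ β := by
    intro t ht
    have ht0 : 0 < t := lt_of_lt_of_le one_pos ht
    have h1 : ‖H t‖ ≤ t ^ (β+1) * (M / t) := by
      rw [hHnorm t ht0]
      exact mul_le_mul_of_nonneg_left (hdecay t ht0) (Real.rpow_pos_of_pos ht0 _).le
    have h2 : t ^ (β+1) * (M / t) = M * t ^ β := by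
      rw [Real.rpow_add ht0, Real.rpow_one]
      field_simp
    rw [h2] at h1
    exact h1
  refine ⟨?_, ?_, ?_⟩
  · -- continuity
    have hHfun : EqOn H (fun t => ((t ^ (β + 1) : ℝ) : ℂ) * 𝓕 g (-(ε*t)/(2*π))) (Ioi 0) :=
      fun t _ => key t
    refine ContinuousOn.congr ?_ hHfun
    apply ContinuousOn.mul
    · refine Complex.continuous_ofReal.comp_continuousOn ?_
      intro t ht
      exact (Real.continuousAt_rpow_const t (β+1)
        (Or.inl (ne_of_gt (mem_Ioi.mp ht)))).continuousWithinAt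
    · have hFcont : Continuous (𝓕 g) :=
        VectorFourier.fourierIntegral_continuous Real.continuous_fourierChar
          (by exact continuous_inner) hgi
      exact (hFcont.comp (((continuous_const.mul continuous_id).neg).div_const _)).continuousOn
  · -- boundedness
    refine ⟨max A M + 1, by positivity, fun t ht => ?_⟩
    rcases le_or_gt t 1 with h1 | h1
    · have : ‖H t‖ ≤ t ^ (β+1) * A := by
        rw [hHnorm t ht]
        exact mul_le_mul_of_nonneg_left (hFA _) (Real.rpow_pos_of_pos ht _).le
      have h2 : t ^ (β+1) ≤ 1 :=
        Real.rpow_le_one ht.le h1 (by linarith [hβ.1])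
      calc ‖H t‖ ≤ t ^ (β+1) * A := this
        _ ≤ 1 * A := mul_le_mul_of_nonneg_right h2 hA
        _ = A := one_mul A
        _ ≤ max A M + 1 := by linarith [le_max_left A M]
    · have h2 : t ^ β ≤ 1 :=
        Real.rpow_le_one_of_one_le_of_nonpos h1.le hβ.2.le
      calc ‖H t‖ ≤ M * t ^ β := hbig t h1.le
        _ ≤ M * 1 := mul_le_mul_of_nonneg_left h2 hM0
        _ = M := mul_one M
        _ ≤ max A M + 1 := by linarith [le_max_right A M]
  · -- limit at infinity
    have hlim : Tendsto (fun t : ℝ => M * t ^ β) atTop (nhds 0) := by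
      have h := tendsto_rpow_neg_atTop (y := -β) (by linarith [hβ.2])
      simp only [neg_neg] at h
      have := h.const_mul M
      simpa using this
    refine squeeze_zero_norm' ?_ hlim
    filter_upwards [eventually_ge_atTop (1:ℝ)] with t ht using hbig t ht
end

section
/- Let φ : ℝ → ℝ be a C^∞ function with φ(s) = 0 for s ≤ 1/2 and φ(s) = 1 for s ≥ 1, and let β ∈ (−1, 0). Set I_β = lim_{R→∞} ∫₀^R s^{β} e^{is} ds (which exists). Then for every u > 0 the improper integral F(u) = lim_{R→∞} ∫₀^R φ(s) s^{β} e^{i u s} ds exists, and there is a constant C > 0 such that |F(u) − I_β · u^{−β−1}| ≤ C for all u > 0. -/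
open MeasureTheory Set Filter Topology

lemma aux_ofReal {f : ℝ → ℝ} {a b : ℝ} (h : IntervalIntegrable f volume a b) :
    IntervalIntegrable (fun x => ((f x : ℝ) : ℂ)) volume a b := ⟨h.1.ofReal, h.2.ofReal⟩

lemma aux_int {β : ℝ} (hβ : -1 < β) (u a b : ℝ) :
    IntervalIntegrable (fun s : ℝ => ((s ^ β : ℝ) : ℂ) *
      Complex.exp (Complex.I * ((u * s : ℝ) : ℂ))) volume a b := by
  apply (aux_ofReal (intervalIntegral.intervalIntegrable_rpow' hβ)).mul_continuousOn
  fun_prop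

lemma aux_deriv {β : ℝ} {x : ℝ} (hx : 0 < x) :
    HasDerivAt (fun s : ℝ => ((s ^ β : ℝ) : ℂ) * Complex.exp (Complex.I * (s : ℂ)) / Complex.I)
      (((x ^ β : ℝ) : ℂ) * Complex.exp (Complex.I * (x : ℂ)) +
        ((β * x ^ (β - 1) : ℝ) : ℂ) * Complex.exp (Complex.I * (x : ℂ)) / Complex.I) x := by
  have h1 : HasDerivAt (fun s : ℝ => ((s ^ β : ℝ) : ℂ)) ((β * x ^ (β - 1) : ℝ) : ℂ) x :=
    (Real.hasDerivAt_rpow_const (Or.inl hx.ne')).ofReal_comp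
  have h2 : HasDerivAt (fun s : ℝ => Complex.exp (Complex.I * (s : ℂ)))
      (Complex.exp (Complex.I * (x : ℂ)) * Complex.I) x := by
    have : HasDerivAt (fun z : ℂ => Complex.exp (Complex.I * z))
        (Complex.exp (Complex.I * (x : ℂ)) * Complex.I) (x : ℂ) := by
      have h := (Complex.hasDerivAt_exp (Complex.I * x)).comp (x : ℂ)
        ((hasDerivAt_id (x : ℂ)).const_mul Complex.I)
      rw [mul_one] at h
      exact h
    exact this.comp_ofReal
  have := (h1.mul h2).div_const Complex.I
  convert this using 1
  · rfl
  · rfl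
  field_simp [Complex.I_ne_zero]
  ring

lemma aux_contOn {γ : ℝ} {R : ℝ} (hR : 1 ≤ R) :
    ContinuousOn (fun s : ℝ => ((s ^ γ : ℝ) : ℂ) * Complex.exp (Complex.I * (s : ℂ)))
      (Set.uIcc 1 R) := by
  apply ContinuousOn.mul
  · apply Complex.continuous_ofReal.comp_continuousOn
    intro x hx
    rw [Set.uIcc_of_le hR] at hx
    exact (Real.continuousAt_rpow_const x γ (Or.inl (by linarith [hx.1]))).continuousWithinAt
  · fun_prop

lemma aux_ibp {β : ℝ} (hβ : β ∈ Ioo (-1 : ℝ) 0) {R : ℝ} (hR : 1 ≤ R) :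
    ∫ s in (1:ℝ)..R, ((s ^ β : ℝ) : ℂ) * Complex.exp (Complex.I * (s : ℂ)) =
      ((R ^ β : ℝ) : ℂ) * Complex.exp (Complex.I * (R : ℂ)) / Complex.I -
        Complex.exp (Complex.I * (1 : ℂ)) / Complex.I -
        ((β : ℂ) / Complex.I) *
          ∫ s in (1:ℝ)..R, ((s ^ (β - 1) : ℝ) : ℂ) * Complex.exp (Complex.I * (s : ℂ)) := by
  have hint1 : IntervalIntegrable
      (fun s : ℝ => ((s ^ β : ℝ) : ℂ) * Complex.exp (Complex.I * (s : ℂ))) volume 1 R :=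
    (aux_contOn hR).intervalIntegrable
  have hint2 : IntervalIntegrable
      (fun s : ℝ => ((s ^ (β - 1) : ℝ) : ℂ) * Complex.exp (Complex.I * (s : ℂ))) volume 1 R :=
    (aux_contOn hR).intervalIntegrable
  have hint2' : IntervalIntegrable
      (fun s : ℝ => ((β * s ^ (β - 1) : ℝ) : ℂ) * Complex.exp (Complex.I * (s : ℂ)) / Complex.I)
      volume 1 R := by
    have : (fun s : ℝ => ((β * s ^ (β - 1) : ℝ) : ℂ) * Complex.exp (Complex.I * (s : ℂ)) /
        Complex.I) = fun s : ℝ => ((β : ℂ) / Complex.I) *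
          (((s ^ (β - 1) : ℝ) : ℂ) * Complex.exp (Complex.I * (s : ℂ))) := by
      funext s; push_cast; ring
    rw [this]
    exact hint2.const_mul _
  have key := intervalIntegral.integral_eq_sub_of_hasDerivAt
    (f := fun s : ℝ => ((s ^ β : ℝ) : ℂ) * Complex.exp (Complex.I * (s : ℂ)) / Complex.I)
    (f' := fun s : ℝ => ((s ^ β : ℝ) : ℂ) * Complex.exp (Complex.I * (s : ℂ)) +
      ((β * s ^ (β - 1) : ℝ) : ℂ) * Complex.exp (Complex.I * (s : ℂ)) / Complex.I)
    (fun x hx => by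
      rw [Set.uIcc_of_le hR] at hx
      exact aux_deriv (by linarith [hx.1]))
    (hint1.add hint2')
  rw [intervalIntegral.integral_add hint1 hint2'] at key
  have h2eq : ∫ s in (1:ℝ)..R,
      ((β * s ^ (β - 1) : ℝ) : ℂ) * Complex.exp (Complex.I * (s : ℂ)) / Complex.I =
      ((β : ℂ) / Complex.I) *
        ∫ s in (1:ℝ)..R, ((s ^ (β - 1) : ℝ) : ℂ) * Complex.exp (Complex.I * (s : ℂ)) := by
    rw [← intervalIntegral.integral_const_mul]
    congr 1; funext s; push_cast; ring
  rw [h2eq] at key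
  have h1 : ((1:ℝ) ^ β : ℝ) = 1 := Real.one_rpow β
  have key' : (∫ x in (1:ℝ)..R, ((x ^ β : ℝ) : ℂ) * Complex.exp (Complex.I * (x : ℂ))) +
      ((β : ℂ) / Complex.I) *
        (∫ s in (1:ℝ)..R, ((s ^ (β - 1) : ℝ) : ℂ) * Complex.exp (Complex.I * (s : ℂ))) =
      ((R ^ β : ℝ) : ℂ) * Complex.exp (Complex.I * (R : ℂ)) / Complex.I -
        (((1:ℝ) ^ β : ℝ) : ℂ) * Complex.exp (Complex.I * ((1:ℝ) : ℂ)) / Complex.I := key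
  rw [h1] at key'
  push_cast at key' ⊢
  linear_combination key'

lemma aux_tail {β : ℝ} (hβ : β ∈ Ioo (-1 : ℝ) 0) :
    IntegrableOn (fun s : ℝ => ((s ^ (β - 1) : ℝ) : ℂ) * Complex.exp (Complex.I * (s : ℂ)))
      (Ioi (1:ℝ)) := by
  apply Integrable.mono' (g := fun s : ℝ => s ^ (β - 1))
    (integrableOn_Ioi_rpow_of_lt (by linarith [hβ.2]) one_pos)
  · apply ContinuousOn.aestronglyMeasurable _ measurableSet_Ioi
    apply ContinuousOn.mul
    · apply Complex.continuous_ofReal.comp_continuousOn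
      intro x hx
      exact (Real.continuousAt_rpow_const x _
        (Or.inl (ne_of_gt (lt_trans one_pos hx)))).continuousWithinAt
    · exact Continuous.continuousOn (by fun_prop)
  · filter_upwards [ae_restrict_mem measurableSet_Ioi] with s hs
    have h0 : (0:ℝ) < s := lt_trans one_pos hs
    have he : ‖Complex.exp (Complex.I * (s : ℂ))‖ = 1 := by
      simp [Complex.norm_exp]
    rw [norm_mul, he, mul_one, Complex.norm_real, Real.norm_eq_abs,
      abs_of_nonneg (Real.rpow_nonneg h0.le _)]

lemma aux_int' {β : ℝ} (hβ : -1 < β) (a b : ℝ) :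
    IntervalIntegrable (fun s : ℝ => ((s ^ β : ℝ) : ℂ) * Complex.exp (Complex.I * (s : ℂ)))
      volume a b := by
  simpa using aux_int hβ 1 a b

lemma aux_G {β : ℝ} (hβ : β ∈ Ioo (-1:ℝ) 0) :
    ∃ Iβ : ℂ, Tendsto (fun R : ℝ => ∫ s in (0:ℝ)..R,
        ((s ^ β : ℝ) : ℂ) * Complex.exp (Complex.I * (s : ℂ))) atTop (𝓝 Iβ) := by
  have hJ := intervalIntegral_tendsto_integral_Ioi 1 (aux_tail hβ) tendsto_id
  have hH : Tendsto (fun R : ℝ => ((R ^ β : ℝ) : ℂ) * Complex.exp (Complex.I * (R : ℂ)) / Complex.I)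
      atTop (𝓝 0) := by
    have hg : Tendsto (fun R : ℝ => R ^ β) atTop (𝓝 0) := by
      simpa using tendsto_rpow_neg_atTop (y := -β) (by linarith [hβ.2])
    apply squeeze_zero_norm' ?_ hg
    filter_upwards [eventually_gt_atTop (0:ℝ)] with R hR
    have he : ‖Complex.exp (Complex.I * (R : ℂ))‖ = 1 := by
      simp [Complex.norm_exp]
    rw [norm_div, norm_mul, he, mul_one, Complex.norm_I, div_one, Complex.norm_real,
      Real.norm_eq_abs, abs_of_nonneg (Real.rpow_nonneg hR.le _)]
  refine ⟨_, Tendsto.congr' ?_ ((tendsto_const_nhds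
      (x := ∫ s in (0:ℝ)..1, ((s ^ β : ℝ) : ℂ) * Complex.exp (Complex.I * (s : ℂ)))).add
    (((hH.sub (tendsto_const_nhds (x := Complex.exp (Complex.I * (1:ℂ)) / Complex.I))).sub
      ((tendsto_const_nhds (x := (β:ℂ)/Complex.I)).mul hJ))))⟩
  filter_upwards [eventually_ge_atTop (1:ℝ)] with R hR
  simp only [id]
  rw [← intervalIntegral.integral_add_adjacent_intervals (aux_int' hβ.1 0 1)
    (aux_int' hβ.1 1 R), aux_ibp hβ hR]

lemma aux_scale {β : ℝ} {u R : ℝ} (hu : 0 < u) (hR : 0 ≤ R) :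
    ∫ s in (0:ℝ)..R, ((s ^ β : ℝ) : ℂ) * Complex.exp (Complex.I * ((u * s : ℝ) : ℂ)) =
      ((u ^ (-β - 1) : ℝ) : ℂ) *
        ∫ s in (0:ℝ)..(u * R), ((s ^ β : ℝ) : ℂ) * Complex.exp (Complex.I * (s : ℂ)) := by
  have h1 : (∫ s in (0:ℝ)..R, (((u*s) ^ β : ℝ) : ℂ) * Complex.exp (Complex.I * ((u*s : ℝ) : ℂ)))
      = u⁻¹ • ∫ s in (u*0)..(u*R), ((s ^ β : ℝ) : ℂ) * Complex.exp (Complex.I * (s : ℂ)) := by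
    simpa using intervalIntegral.integral_comp_mul_left
      (f := fun t : ℝ => ((t ^ β : ℝ) : ℂ) * Complex.exp (Complex.I * (t : ℂ)))
      (a := 0) (b := R) hu.ne'
  have hb : ((u ^ β : ℝ) : ℂ) ≠ 0 := by
    simpa using (Real.rpow_pos_of_pos hu β).ne'
  have h2 : (∫ s in (0:ℝ)..R, ((s ^ β : ℝ) : ℂ) * Complex.exp (Complex.I * ((u * s : ℝ) : ℂ)))
      = ((u ^ β : ℝ) : ℂ)⁻¹ * ∫ s in (0:ℝ)..R,
          (((u*s) ^ β : ℝ) : ℂ) * Complex.exp (Complex.I * ((u*s : ℝ) : ℂ)) := by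
    rw [← intervalIntegral.integral_const_mul]
    apply intervalIntegral.integral_congr
    intro s hs
    rw [Set.uIcc_of_le hR] at hs
    simp only [Real.mul_rpow hu.le hs.1]
    push_cast
    field_simp
  have hcr : (u ^ (-β - 1) : ℝ) = (u ^ β)⁻¹ * u⁻¹ := by
    rw [show -β - 1 = -β + (-1) by ring, Real.rpow_add hu, Real.rpow_neg_one,
      Real.rpow_neg hu.le]
  rw [h2, h1, mul_zero, Complex.real_smul, hcr]
  push_cast
  ring

/-- The key computation in the proof of Lemma 2.3(ii): with `φ` a smooth
cut-off and `β ∈ (-1,0)`, letting `I_β = ∫₀^∞ s^β e^{is} ds`, the improper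
integral `F(u) = ∫₀^∞ φ(s) s^β e^{ius} ds` exists for every `u > 0`, and
`|F(u) - I_β u^{-β-1}| ≤ C` uniformly in `u > 0`. -/
theorem oscillating_dunkl_lemma_2_3_ii
    (φ : ℝ → ℝ) (hφ : ContDiff ℝ (⊤ : ℕ∞) φ)
    (hφ0 : ∀ s : ℝ, s ≤ 1 / 2 → φ s = 0) (hφ1 : ∀ s : ℝ, 1 ≤ s → φ s = 1)
    (β : ℝ) (hβ : β ∈ Ioo (-1 : ℝ) 0) :
    ∃ Iβ : ℂ,
      Tendsto (fun R : ℝ => ∫ s in (0:ℝ)..R,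
          ((s ^ β : ℝ) : ℂ) * Complex.exp (Complex.I * ((s : ℝ) : ℂ)))
        atTop (nhds Iβ) ∧
      ∃ F : ℝ → ℂ,
        (∀ u : ℝ, 0 < u →
          Tendsto (fun R : ℝ => ∫ s in (0:ℝ)..R,
              ((φ s * s ^ β : ℝ) : ℂ) * Complex.exp (Complex.I * ((u * s : ℝ) : ℂ)))
            atTop (nhds (F u))) ∧
        ∃ C : ℝ, 0 < C ∧ ∀ u : ℝ, 0 < u →
          ‖F u - Iβ * ((u ^ (-β - 1) : ℝ) : ℂ)‖ ≤ C := by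
  obtain ⟨Iβ, hG⟩ := aux_G hβ
  refine ⟨Iβ, hG, ?_⟩
  -- continuity of φ s * s ^ β
  have hg : Continuous fun s : ℝ => φ s * s ^ β := by
    rw [continuous_iff_continuousAt]
    intro x
    rcases lt_or_ge x (1/2) with hx | hx
    · have hev : (fun s : ℝ => φ s * s ^ β) =ᶠ[𝓝 x] fun _ => (0:ℝ) := by
        filter_upwards [Iio_mem_nhds hx] with s hs
        simp [hφ0 s hs.le]
      exact hev.continuousAt
    · exact (hφ.continuous.continuousAt).mul
        (Real.continuousAt_rpow_const x β (Or.inl (by positivity)))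
  have hp : ∀ u : ℝ, Continuous fun s : ℝ =>
      ((φ s * s ^ β : ℝ) : ℂ) * Complex.exp (Complex.I * ((u * s : ℝ) : ℂ)) :=
    fun u => (Complex.continuous_ofReal.comp hg).mul (by fun_prop)
  have hq_int : ∀ u a b : ℝ, IntervalIntegrable (fun s : ℝ =>
      (((φ s - 1) * s ^ β : ℝ) : ℂ) * Complex.exp (Complex.I * ((u * s : ℝ) : ℂ)))
      volume a b := by
    intro u a b
    have heq : (fun s : ℝ =>
        (((φ s - 1) * s ^ β : ℝ) : ℂ) * Complex.exp (Complex.I * ((u * s : ℝ) : ℂ)))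
        = fun s : ℝ => ((φ s * s ^ β : ℝ) : ℂ) * Complex.exp (Complex.I * ((u * s : ℝ) : ℂ))
          - ((s ^ β : ℝ) : ℂ) * Complex.exp (Complex.I * ((u * s : ℝ) : ℂ)) := by
      funext s; push_cast; ring
    rw [heq]
    exact ((hp u).intervalIntegrable a b).sub (aux_int hβ.1 u a b)
  refine ⟨fun u => (∫ s in (0:ℝ)..1,
      (((φ s - 1) * s ^ β : ℝ) : ℂ) * Complex.exp (Complex.I * ((u * s : ℝ) : ℂ)))
      + ((u ^ (-β - 1) : ℝ) : ℂ) * Iβ, ?_, ?_⟩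
  · intro u hu
    apply Tendsto.congr' ?_ ((tendsto_const_nhds (x := ∫ s in (0:ℝ)..1,
        (((φ s - 1) * s ^ β : ℝ) : ℂ) * Complex.exp (Complex.I * ((u * s : ℝ) : ℂ)))).add
      ((tendsto_const_nhds (x := ((u ^ (-β - 1) : ℝ) : ℂ))).mul
        (hG.comp (tendsto_id.const_mul_atTop hu))))
    filter_upwards [eventually_ge_atTop (1:ℝ)] with R hR
    have hR0 : (0:ℝ) ≤ R := by linarith
    simp only [Function.comp, id]
    have hfun : (fun s : ℝ =>
        ((φ s * s ^ β : ℝ) : ℂ) * Complex.exp (Complex.I * ((u * s : ℝ) : ℂ)))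
        = fun s : ℝ => (((φ s - 1) * s ^ β : ℝ) : ℂ) * Complex.exp (Complex.I * ((u * s : ℝ) : ℂ))
          + ((s ^ β : ℝ) : ℂ) * Complex.exp (Complex.I * ((u * s : ℝ) : ℂ)) := by
      funext s; push_cast; ring
    rw [hfun, intervalIntegral.integral_add (hq_int u 0 R) (aux_int hβ.1 u 0 R),
      ← intervalIntegral.integral_add_adjacent_intervals (hq_int u 0 1) (hq_int u 1 R),
      aux_scale hu hR0]
    have hzero : (∫ s in (1:ℝ)..R,
        (((φ s - 1) * s ^ β : ℝ) : ℂ) * Complex.exp (Complex.I * ((u * s : ℝ) : ℂ))) = 0 := by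
      rw [intervalIntegral.integral_congr (g := fun _ => (0:ℂ)), intervalIntegral.integral_zero]
      intro s hs
      rw [Set.uIcc_of_le hR] at hs
      simp [hφ1 s hs.1]
    rw [hzero, add_zero]
  · obtain ⟨M, hM⟩ := isCompact_Icc.exists_bound_of_continuousOn
      (f := fun s : ℝ => φ s - 1) (s := Icc (0:ℝ) 1)
      (Continuous.continuousOn (hφ.continuous.sub continuous_const))
    have hM0 : 0 ≤ M := le_trans (norm_nonneg _) (hM 0 ⟨le_refl 0, by norm_num⟩)
    have hb1 : (0:ℝ) < β + 1 := by linarith [hβ.1]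
    refine ⟨M / (β + 1) + 1, by positivity, ?_⟩
    intro u hu
    have hrw : (∫ s in (0:ℝ)..1,
        (((φ s - 1) * s ^ β : ℝ) : ℂ) * Complex.exp (Complex.I * ((u * s : ℝ) : ℂ)))
        + ((u ^ (-β - 1) : ℝ) : ℂ) * Iβ - Iβ * ((u ^ (-β - 1) : ℝ) : ℂ)
        = ∫ s in (0:ℝ)..1,
          (((φ s - 1) * s ^ β : ℝ) : ℂ) * Complex.exp (Complex.I * ((u * s : ℝ) : ℂ)) := by
      ring
    rw [hrw]
    have hMint : IntervalIntegrable (fun s : ℝ => M * s ^ β) volume 0 1 :=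
      (intervalIntegral.intervalIntegrable_rpow' hβ.1).const_mul M
    have hbound := intervalIntegral.norm_integral_le_abs_of_norm_le
      (f := fun s : ℝ =>
        (((φ s - 1) * s ^ β : ℝ) : ℂ) * Complex.exp (Complex.I * ((u * s : ℝ) : ℂ)))
      (g := fun s : ℝ => M * s ^ β) ?_ hMint
    · refine le_trans hbound ?_
      have : ∫ s in (0:ℝ)..1, M * s ^ β = M * ((1:ℝ) ^ (β+1) - (0:ℝ) ^ (β+1)) / (β + 1) := by
        rw [intervalIntegral.integral_const_mul, integral_rpow (Or.inl hβ.1)]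
        ring
      rw [this, Real.one_rpow, Real.zero_rpow hb1.ne']
      rw [abs_of_nonneg (by positivity)]
      rw [sub_zero, mul_one]
      linarith
    · filter_upwards [ae_restrict_mem measurableSet_uIoc] with s hs
      rw [Set.uIoc_of_le (by norm_num : (0:ℝ) ≤ 1)] at hs
      have hs0 : 0 < s := hs.1
      have he : ‖Complex.exp (Complex.I * ((u * s : ℝ) : ℂ))‖ = 1 := by
        simp [Complex.norm_exp]
      rw [norm_mul, he, mul_one, Complex.norm_real, Real.norm_eq_abs, abs_mul,
        abs_of_nonneg (Real.rpow_nonneg hs0.le β)]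
      exact mul_le_mul_of_nonneg_right (hM s ⟨hs0.le, hs.2⟩) (Real.rpow_nonneg hs0.le β)
end

section
/- Let ψ : ℝ → ℝ be a C^∞ function with 0 ≤ ψ ≤ 1, with support contained in {t ∈ ℝ : 1/2 ≤ |t| ≤ 2}, and such that Σ_{ν ∈ ℤ} ψ(2^{−ν} t) = 1 for all t ≠ 0. For ν ∈ ℕ set Ψ_ν(s) = Σ_{j=0}^{ν} ψ(2^{−j} s). Let β ∈ (−1, 0). Then there exists a constant C > 0 such that for every ν ∈ ℕ and every u > 0, |∫₀^∞ Ψ_ν(s) s^{β} e^{i u s} ds| ≤ C (1 + u^{−β−1}). -/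
open MeasureTheory Set Filter

lemma geom_tail (m n : ℕ) : ∑ j ∈ Finset.Ico m n, ((2:ℝ)^j)⁻¹ ≤ 2 * ((2:ℝ)^m)⁻¹ := by
  rw [Finset.sum_Ico_eq_sum_range]
  have h : ∀ k, ((2:ℝ)^(m+k))⁻¹ = ((2:ℝ)^m)⁻¹ * ((1:ℝ)/2)^k := by
    intro k; rw [pow_add, mul_inv]; ring_nf; norm_num
  simp only [h, ← Finset.mul_sum]
  have hg : ∑ k ∈ Finset.range (n - m), ((1:ℝ)/2)^k ≤ 2 := by
    rw [geom_sum_eq (by norm_num : (1:ℝ)/2 ≠ 1) (n - m),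
      div_le_iff_of_neg (by norm_num : (1:ℝ)/2 - 1 < 0)]
    have h0 : (0:ℝ) ≤ ((1:ℝ)/2)^(n-m) := by positivity
    nlinarith
  calc ((2:ℝ)^m)⁻¹ * ∑ k ∈ Finset.range (n - m), ((1:ℝ)/2)^k ≤ ((2:ℝ)^m)⁻¹ * 2 :=
        mul_le_mul_of_nonneg_left hg (by positivity)
    _ = 2 * ((2:ℝ)^m)⁻¹ := by ring

lemma geom_aux (n : ℕ) (s : ℝ) (hs : 0 < s) :
    ∑ j ∈ Finset.range n, (if s ≤ 2^(j+1) then ((2:ℝ)^j)⁻¹ else 0) ≤ 4 / s := by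
  by_cases hex : ∃ j : ℕ, s ≤ (2:ℝ)^(j+1)
  · set m := Nat.find hex with hm_def
    have hm : s ≤ (2:ℝ)^(m+1) := Nat.find_spec hex
    have step1 : ∑ j ∈ Finset.range n, (if s ≤ (2:ℝ)^(j+1) then ((2:ℝ)^j)⁻¹ else 0)
        ≤ ∑ j ∈ Finset.range n, (if m ≤ j then ((2:ℝ)^j)⁻¹ else 0) := by
      apply Finset.sum_le_sum
      intro j _
      by_cases h : s ≤ (2:ℝ)^(j+1)
      · have : m ≤ j := Nat.find_min' hex h
        simp [h, this]
      · simp only [h, if_false]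
        positivity
    have step2 : ∑ j ∈ Finset.range n, (if m ≤ j then ((2:ℝ)^j)⁻¹ else 0)
        = ∑ j ∈ Finset.Ico m n, ((2:ℝ)^j)⁻¹ := by
      rw [← Finset.sum_filter]
      congr 1
      ext j
      simp [Finset.mem_filter, Finset.mem_Ico, and_comm]
    have step3 : 2 * ((2:ℝ)^m)⁻¹ ≤ 4 / s := by
      have h2m : (0:ℝ) < 2^m := by positivity
      rw [le_div_iff₀ hs]
      have h1 := mul_le_mul_of_nonneg_left hm (inv_nonneg.mpr h2m.le)
      have h2 : (2:ℝ)^(m+1) = 2 * 2^m := by ring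
      have h3 : ((2:ℝ)^m)⁻¹ * 2^m = 1 := inv_mul_cancel₀ h2m.ne'
      nlinarith
    calc _ ≤ ∑ j ∈ Finset.Ico m n, ((2:ℝ)^j)⁻¹ := step1.trans step2.le
      _ ≤ 2 * ((2:ℝ)^m)⁻¹ := geom_tail m n
      _ ≤ 4 / s := step3
  · push_neg at hex
    have h : ∀ j ∈ Finset.range n, (if s ≤ (2:ℝ)^(j+1) then ((2:ℝ)^j)⁻¹ else 0) = 0 := by
      intro j _
      simp [not_le.mpr (hex j)]
    rw [Finset.sum_congr rfl h]
    simp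
    positivity

lemma psum_le_one (ψ : ℝ → ℝ) (hψ0 : ∀ t : ℝ, 0 ≤ ψ t)
    (hsupp : Function.support ψ ⊆ {t : ℝ | 1/2 ≤ |t| ∧ |t| ≤ 2})
    (hsum : ∀ t : ℝ, t ≠ 0 → ∑ᶠ ν : ℤ, ψ ((2:ℝ) ^ (-ν) * t) = 1)
    (n : ℕ) (s : ℝ) (hs : 0 < s) :
    ∑ j ∈ Finset.range n, ψ ((2:ℝ) ^ (-(j:ℤ)) * s) ≤ 1 := by
  set f : ℤ → ℝ := fun k => ψ ((2:ℝ) ^ (-k) * s) with hf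
  have hmem : ∀ k : ℤ, f k ≠ 0 → (2:ℝ)^(-k) * s ≤ 2 ∧ 1/2 ≤ (2:ℝ)^(-k) * s := by
    intro k hk
    have h1 := hsupp (Function.mem_support.mpr hk)
    have hpos : 0 < (2:ℝ)^(-k) * s := by positivity
    rw [Set.mem_setOf_eq, abs_of_pos hpos] at h1
    exact ⟨h1.2, h1.1⟩
  have hfin : (Function.support f).Finite := by
    by_cases hne : (Function.support f).Nonempty
    · obtain ⟨m, hm⟩ := hne
      apply Set.Finite.subset (Set.finite_Icc (m-2) (m+2))
      intro k hk
      have hkm := hmem k hk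
      have hmm := hmem m hm
      have h2k : (0:ℝ) < (2:ℝ)^(-k) := by positivity
      have h2m : (0:ℝ) < (2:ℝ)^(-m) := by positivity
      have hub : (2:ℝ)^(-k) ≤ 4 * (2:ℝ)^(-m) := by nlinarith [hkm.1, hmm.2]
      have hlb : (2:ℝ)^(-m) ≤ 4 * (2:ℝ)^(-k) := by nlinarith [hmm.1, hkm.2]
      have e1 : (4:ℝ) = (2:ℝ)^(2:ℤ) := by norm_num
      rw [e1] at hub hlb
      rw [← zpow_add₀ (by norm_num : (2:ℝ) ≠ 0)] at hub hlb
      have hk1 : -k ≤ 2 + -m := (zpow_le_zpow_iff_right₀ (by norm_num : (1:ℝ) < 2)).mp hub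
      have hk2 : -m ≤ 2 + -k := (zpow_le_zpow_iff_right₀ (by norm_num : (1:ℝ) < 2)).mp hlb
      rw [Set.mem_Icc]
      omega
    · rw [Set.not_nonempty_iff_eq_empty] at hne
      rw [hne]; exact Set.finite_empty
  have htot : ∑ k ∈ hfin.toFinset, f k = 1 := by
    rw [← finsum_eq_sum f hfin]
    exact hsum s hs.ne'
  set A : Finset ℤ := (Finset.range n).image (Nat.cast : ℕ → ℤ) with hA
  have hsumA : ∑ j ∈ Finset.range n, ψ ((2:ℝ) ^ (-(j:ℤ)) * s) = ∑ k ∈ A, f k := by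
    rw [hA, Finset.sum_image (fun x _ y _ h => Nat.cast_injective h)]
  rw [hsumA, ← htot]
  have h1 : ∑ k ∈ A, f k ≤ ∑ k ∈ A ∪ hfin.toFinset, f k :=
    Finset.sum_le_sum_of_subset_of_nonneg Finset.subset_union_left
      (fun k _ _ => hψ0 _)
  have h2 : ∑ k ∈ A ∪ hfin.toFinset, f k = ∑ k ∈ hfin.toFinset, f k := by
    refine (Finset.sum_subset Finset.subset_union_right ?_).symm
    intro k _ hk
    rw [Set.Finite.mem_toFinset] at hk
    exact Function.notMem_support.mp hk
  rw [← h2]; exact h1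

set_option maxHeartbeats 2000000 in
/-- The uniform bound (2.10) from the proof of Lemma 2.4: with
`Ψ_ν(s) = Σ_{j=0}^{ν} ψ(2^{-j}s)` built from a Littlewood–Paley partition
`ψ`, and `β ∈ (-1,0)`, there is `C > 0` such that for all `ν ∈ ℕ` and
`u > 0`, `|∫₀^∞ Ψ_ν(s) s^β e^{ius} ds| ≤ C (1 + u^{-β-1})`. -/
theorem oscillating_dunkl_estimate_2_10
    (ψ : ℝ → ℝ) (hψ : ContDiff ℝ (⊤ : ℕ∞) ψ) (hψ01 : ∀ t : ℝ, 0 ≤ ψ t ∧ ψ t ≤ 1)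
    (hsupp : Function.support ψ ⊆ {t : ℝ | 1/2 ≤ |t| ∧ |t| ≤ 2})
    (hsum : ∀ t : ℝ, t ≠ 0 → ∑ᶠ ν : ℤ, ψ ((2:ℝ) ^ (-ν) * t) = 1)
    (Ψ : ℕ → ℝ → ℝ)
    (hΨ : ∀ ν : ℕ, ∀ s : ℝ, Ψ ν s = ∑ j ∈ Finset.range (ν + 1), ψ ((2:ℝ) ^ (-(j:ℤ)) * s))
    (β : ℝ) (hβ : β ∈ Ioo (-1 : ℝ) 0) :
    ∃ C : ℝ, 0 < C ∧ ∀ ν : ℕ, ∀ u : ℝ, 0 < u →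
      ‖∫ s in Ioi (0:ℝ),
          ((Ψ ν s * s ^ β : ℝ) : ℂ) * Complex.exp (Complex.I * ((u * s : ℝ) : ℂ))‖
        ≤ C * (1 + u ^ (-β - 1)) := by
  obtain ⟨hβ1, hβ0⟩ := hβ
  -- bound on the derivative of ψ
  have hψcont : Continuous ψ := hψ.continuous
  have hψ'cont : Continuous (deriv ψ) := hψ.continuous_deriv (by simp)
  have hψcs : HasCompactSupport ψ := by
    apply HasCompactSupport.intro (isCompact_Icc (a := (-2:ℝ)) (b := 2))
    intro x hx
    by_contra hne
    have := (hsupp (Function.mem_support.mpr hne)).2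
    rw [Set.mem_Icc] at hx
    rcases abs_le.mp this with ⟨h1, h2⟩
    exact hx ⟨h1, h2⟩
  obtain ⟨M, hM⟩ := (hψcs.deriv).exists_bound_of_continuous hψ'cont
  have hM0 : 0 ≤ M := le_trans (norm_nonneg _) (hM 0)
  -- closedness of the annulus
  have hSclosed : IsClosed {t : ℝ | 1/2 ≤ |t| ∧ |t| ≤ 2} :=
    (isClosed_le continuous_const continuous_abs).inter
      (isClosed_le continuous_abs continuous_const)
  have hψ'supp : ∀ t : ℝ, 2 < |t| → deriv ψ t = 0 := by
    intro t ht
    by_contra hne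
    have h1 : t ∈ tsupport ψ := support_deriv_subset (Function.mem_support.mpr hne)
    have h2 : tsupport ψ ⊆ {t : ℝ | 1/2 ≤ |t| ∧ |t| ≤ 2} := closure_minimal hsupp hSclosed
    exact absurd (h2 h1).2 (not_le.mpr ht)
  have hψsupp : ∀ t : ℝ, 2 < |t| → ψ t = 0 := by
    intro t ht
    by_contra hne
    exact absurd (hsupp (Function.mem_support.mpr hne)).2 (not_le.mpr ht)
  set K : ℝ := 4 * M + 1 with hK
  have hK0 : 0 < K := by linarith
  have hb1 : (0:ℝ) < β + 1 := by linarith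
  have hnb : (0:ℝ) < -β := by linarith
  refine ⟨1/(β+1) + 1 + K/(-β), by positivity, ?_⟩
  intro ν u hu
  set X : ℝ := u ^ (-β - 1) with hX
  have hX0 : 0 ≤ X := Real.rpow_nonneg hu.le _
  set a : ℝ := max (1/4 : ℝ) u⁻¹ with ha_def
  have ha0 : (0:ℝ) < a := lt_of_lt_of_le (by norm_num) (le_max_left _ _)
  have hau : u⁻¹ ≤ a := le_max_right _ _
  set b : ℝ := max ((2:ℝ)^(ν+2)) a with hb_def
  have hab : a ≤ b := le_max_right _ _
  have hb2 : (2:ℝ)^(ν+2) ≤ b := le_max_left _ _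
  have hb0 : (0:ℝ) < b := lt_of_lt_of_le ha0 hab
  -- basic facts about Ψ
  have hΨ0 : ∀ s : ℝ, 0 ≤ Ψ ν s := by
    intro s; rw [hΨ]; exact Finset.sum_nonneg (fun j _ => (hψ01 _).1)
  have hΨ1 : ∀ s : ℝ, 0 < s → Ψ ν s ≤ 1 := by
    intro s hs; rw [hΨ]
    exact psum_le_one ψ (fun t => (hψ01 t).1) hsupp hsum _ s hs
  have hΨtop : ∀ s : ℝ, (2:ℝ)^(ν+2) ≤ s → Ψ ν s = 0 := by
    intro s hs
    rw [hΨ]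
    apply Finset.sum_eq_zero
    intro j hj
    have hjν : j ≤ ν := Nat.lt_succ_iff.mp (Finset.mem_range.mp hj)
    apply hψsupp
    have hs0 : (0:ℝ) < s := lt_of_lt_of_le (by positivity) hs
    have h2j : (0:ℝ) < (2:ℝ)^(-(j:ℤ)) := by positivity
    rw [abs_of_pos (by positivity)]
    have h1 : (2:ℝ)^(-(ν:ℤ)) ≤ (2:ℝ)^(-(j:ℤ)) :=
      zpow_le_zpow_right₀ (by norm_num) (by omega)
    have h2 : (2:ℝ)^(-(ν:ℤ)) * (2:ℝ)^(ν+2) = 4 := by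
      rw [show ((2:ℝ)^(ν+2) : ℝ) = (2:ℝ)^((ν:ℤ)+2) from by
        rw [← zpow_natCast]; norm_num,
        ← zpow_add₀ (by norm_num : (2:ℝ) ≠ 0)]
      norm_num
    calc (2:ℝ) < 4 := by norm_num
      _ = (2:ℝ)^(-(ν:ℤ)) * (2:ℝ)^(ν+2) := h2.symm
      _ ≤ (2:ℝ)^(-(j:ℤ)) * s := by
          apply mul_le_mul h1 hs (by positivity) h2j.le
  have hΨcont : Continuous (Ψ ν) := by
    have : Ψ ν = fun s => ∑ j ∈ Finset.range (ν + 1), ψ ((2:ℝ) ^ (-(j:ℤ)) * s) :=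
      funext (hΨ ν)
    rw [this]
    exact continuous_finset_sum _ (fun j _ => hψcont.comp (continuous_const.mul continuous_id))
  -- derivative of Ψ
  set D : ℝ → ℝ := fun s => ∑ j ∈ Finset.range (ν + 1),
      (2:ℝ)^(-(j:ℤ)) * deriv ψ ((2:ℝ)^(-(j:ℤ)) * s) with hD_def
  have hDcont : Continuous D := by
    exact continuous_finset_sum _ (fun j _ =>
      continuous_const.mul (hψ'cont.comp (continuous_const.mul continuous_id)))
  have hD : ∀ s : ℝ, HasDerivAt (Ψ ν) (D s) s := by
    intro s
    have hfun : Ψ ν = fun t => ∑ j ∈ Finset.range (ν + 1), ψ ((2:ℝ) ^ (-(j:ℤ)) * t) :=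
      funext (hΨ ν)
    rw [hfun, hD_def]
    apply HasDerivAt.fun_sum
    intro j _
    have h1 : HasDerivAt (fun t : ℝ => (2:ℝ)^(-(j:ℤ)) * t) ((2:ℝ)^(-(j:ℤ))) s := by
      simpa using (hasDerivAt_id s).const_mul ((2:ℝ)^(-(j:ℤ)))
    have h2 : HasDerivAt ψ (deriv ψ ((2:ℝ)^(-(j:ℤ)) * s)) ((2:ℝ)^(-(j:ℤ)) * s) :=
      (hψ.differentiable (by simp) _).hasDerivAt
    have := h2.comp s h1
    simp only [Function.comp_def] at this
    simpa [mul_comm] using this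
  have hDb : ∀ s : ℝ, 0 < s → |D s| ≤ 4 * M / s := by
    intro s hs
    have step : |D s| ≤ ∑ j ∈ Finset.range (ν + 1),
        (if s ≤ 2^(j+1) then M * ((2:ℝ)^j)⁻¹ else 0) := by
      refine (Finset.abs_sum_le_sum_abs _ _).trans (Finset.sum_le_sum ?_)
      intro j _
      have hz : (2:ℝ)^(-(j:ℤ)) = ((2:ℝ)^j)⁻¹ := by
        rw [zpow_neg, zpow_natCast]
      by_cases h : s ≤ (2:ℝ)^(j+1)
      · rw [if_pos h, abs_mul, hz]
        have h2j : (0:ℝ) < ((2:ℝ)^j)⁻¹ := by positivity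
        rw [abs_of_pos h2j, mul_comm M]
        exact mul_le_mul_of_nonneg_left (hM _) h2j.le
      · rw [if_neg h]
        push_neg at h
        have h2j : (0:ℝ) < (2:ℝ)^j := by positivity
        have hkey : (2:ℝ) < |(2:ℝ)^(-(j:ℤ)) * s| := by
          rw [abs_of_pos (by positivity), hz]
          have h3 := mul_lt_mul_of_pos_left h (inv_pos.mpr h2j)
          have h4 : ((2:ℝ)^j)⁻¹ * (2:ℝ)^(j+1) = 2 := by
            rw [pow_succ]
            field_simp
          linarith
        have h0 : deriv ψ (((2:ℝ)^j)⁻¹ * s) = 0 := by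
          rw [← hz]; exact hψ'supp _ hkey
        simp [abs_mul, h0, hz]
    refine step.trans ?_
    have : ∀ j ∈ Finset.range (ν+1), (if s ≤ (2:ℝ)^(j+1) then M * ((2:ℝ)^j)⁻¹ else 0)
        = M * (if s ≤ (2:ℝ)^(j+1) then ((2:ℝ)^j)⁻¹ else 0) := by
      intro j _; split <;> simp
    rw [Finset.sum_congr rfl this, ← Finset.mul_sum]
    calc M * ∑ j ∈ Finset.range (ν+1), (if s ≤ (2:ℝ)^(j+1) then ((2:ℝ)^j)⁻¹ else 0)
        ≤ M * (4 / s) := mul_le_mul_of_nonneg_left (geom_aux _ s hs) hM0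
      _ = 4 * M / s := by ring
  -- complex functions
  set F : ℝ → ℂ := fun s => ((Ψ ν s * s ^ β : ℝ) : ℂ) with hF_def
  set e : ℝ → ℂ := fun s => Complex.exp (Complex.I * ((u * s : ℝ) : ℂ)) with he_def
  set Fd : ℝ → ℝ := fun s => D s * s^β + Ψ ν s * (β * s^(β-1)) with hFd_def
  have hFderiv : ∀ s : ℝ, s ≠ 0 → HasDerivAt F ((Fd s : ℝ) : ℂ) s := by
    intro s hs
    exact ((hD s).mul (Real.hasDerivAt_rpow_const (Or.inl hs))).ofReal_comp
  have hiu : (Complex.I * (u:ℂ)) ≠ 0 := by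
    simp [Complex.I_ne_zero, Complex.ofReal_ne_zero, hu.ne']
  have he : ∀ s : ℝ, HasDerivAt e (e s * (Complex.I * u)) s := by
    intro s
    have h1 : HasDerivAt (fun t : ℝ => ((u * t : ℝ) : ℂ)) (u:ℂ) s := by
      have := ((hasDerivAt_id s).const_mul u).ofReal_comp
      simpa using this
    have h2 := (h1.const_mul Complex.I).cexp
    simpa [he_def, mul_comm, mul_assoc, mul_left_comm] using h2
  set g : ℝ → ℂ := fun s => e s / (Complex.I * u) with hg_def
  have hg : ∀ s : ℝ, HasDerivAt g (e s) s := by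
    intro s
    have h1 := (he s).div_const (Complex.I * u)
    have h2 : e s * (Complex.I * u) / (Complex.I * u) = e s := mul_div_cancel_right₀ _ hiu
    rwa [h2] at h1
  have hnorm_e : ∀ s : ℝ, ‖e s‖ = 1 := by
    intro s
    simp [he_def, Complex.norm_exp]
  have hnorm_g : ∀ s : ℝ, ‖g s‖ = u⁻¹ := by
    intro s
    rw [hg_def]
    rw [norm_div, hnorm_e s]
    simp [abs_of_pos hu]
  -- continuity
  have hrpow_cont : ∀ p : ℝ, ContinuousOn (fun s : ℝ => s ^ p) (Icc a b) := by
    intro p x hx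
    exact (Real.continuousAt_rpow_const x p
      (Or.inl (ne_of_gt (lt_of_lt_of_le ha0 hx.1)))).continuousWithinAt
  have he_cont : Continuous e := by
    apply Complex.continuous_exp.comp
    exact continuous_const.mul (Complex.continuous_ofReal.comp (continuous_const.mul continuous_id))
  have hg_cont : Continuous g := he_cont.div_const _
  have hFd_contOn : ContinuousOn (fun s => ((Fd s : ℝ) : ℂ)) (Icc a b) := by
    apply Complex.continuous_ofReal.comp_continuousOn
    exact ((hDcont.continuousOn).mul (hrpow_cont β)).add
      ((hΨcont.continuousOn).mul (continuousOn_const.mul (hrpow_cont (β-1))))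
  have hF_contOn : ContinuousOn F (Icc a b) :=
    Complex.continuous_ofReal.comp_continuousOn ((hΨcont.continuousOn).mul (hrpow_cont β))
  have hG_contOn : ContinuousOn (fun s => F s * e s) (Icc a b) := hF_contOn.mul he_cont.continuousOn
  have huIcc : uIcc a b = Icc a b := uIcc_of_le hab
  have i1 : IntervalIntegrable (fun s => ((Fd s : ℝ):ℂ)) volume a b := by
    apply ContinuousOn.intervalIntegrable; rwa [huIcc]
  have i2 : IntervalIntegrable e volume a b := he_cont.intervalIntegrable _ _
  have iFe : IntervalIntegrable (fun s => F s * e s) volume a b := by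
    apply ContinuousOn.intervalIntegrable; rwa [huIcc]
  have iFdg : IntervalIntegrable (fun s => ((Fd s:ℝ):ℂ) * g s) volume a b := by
    apply ContinuousOn.intervalIntegrable; rw [huIcc]
    exact hFd_contOn.mul hg_cont.continuousOn
  -- integration by parts
  have hibp : ∫ x in a..b, (((Fd x:ℝ):ℂ) * g x + F x * e x) = F b * g b - F a * g a := by
    apply intervalIntegral.integral_deriv_mul_eq_sub
    · intro x hx
      rw [huIcc] at hx
      exact hFderiv x (ne_of_gt (lt_of_lt_of_le ha0 hx.1))
    · intro x _; exact hg x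
    · exact i1
    · exact i2
  have hFb : F b = 0 := by simp [hF_def, hΨtop b hb2]
  have key : ∫ x in a..b, F x * e x = -(F a * g a) - ∫ x in a..b, ((Fd x:ℝ):ℂ) * g x := by
    rw [intervalIntegral.integral_add iFdg iFe, hFb] at hibp
    linear_combination hibp
  -- pointwise bound for the derivative term
  have hFa_norm : ‖F a‖ ≤ a ^ β := by
    rw [hF_def, Complex.norm_real, Real.norm_eq_abs, abs_mul, abs_of_nonneg (hΨ0 a),
      abs_of_nonneg (Real.rpow_nonneg ha0.le _)]
    nlinarith [hΨ1 a ha0, Real.rpow_nonneg ha0.le β, hΨ0 a]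
  have hFd_norm : ∀ x ∈ Icc a b, ‖((Fd x:ℝ):ℂ) * g x‖ ≤ K * x^(β-1) * u⁻¹ := by
    intro x hx
    have hx0 : 0 < x := lt_of_lt_of_le ha0 hx.1
    rw [norm_mul, Complex.norm_real, hnorm_g]
    have hsub : x^β / x = x^(β-1) := by
      rw [Real.rpow_sub hx0, Real.rpow_one]
    have hrβ : (0:ℝ) ≤ x^β := Real.rpow_nonneg hx0.le _
    have hr0 : (0:ℝ) ≤ x^(β-1) := Real.rpow_nonneg hx0.le _
    have h1 : |Fd x| ≤ K * x^(β-1) := by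
      have t1 : |D x * x^β| ≤ (4*M) * x^(β-1) := by
        rw [abs_mul, abs_of_nonneg hrβ]
        calc |D x| * x^β ≤ (4*M/x) * x^β :=
              mul_le_mul_of_nonneg_right (hDb x hx0) hrβ
          _ = (4*M) * (x^β / x) := by ring
          _ = (4*M) * x^(β-1) := by rw [hsub]
      have t2 : |Ψ ν x * (β * x^(β-1))| ≤ 1 * x^(β-1) := by
        rw [abs_mul, abs_mul, abs_of_nonneg (hΨ0 x), abs_of_nonneg hr0]
        have hβabs : |β| ≤ 1 := by rw [abs_of_neg hβ0]; linarith
        have hm : Ψ ν x * |β| ≤ 1 := by nlinarith [abs_nonneg β, hΨ1 x hx0, hΨ0 x]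
        calc Ψ ν x * (|β| * x^(β-1)) = (Ψ ν x * |β|) * x^(β-1) := by ring
          _ ≤ 1 * x^(β-1) := mul_le_mul_of_nonneg_right hm hr0
      calc |Fd x| ≤ |D x * x^β| + |Ψ ν x * (β * x^(β-1))| := by
            rw [hFd_def]; exact abs_add_le _ _
        _ ≤ (4*M) * x^(β-1) + 1 * x^(β-1) := add_le_add t1 t2
        _ = K * x^(β-1) := by rw [hK]; ring
    calc |Fd x| * u⁻¹ ≤ (K * x^(β-1)) * u⁻¹ :=
          mul_le_mul_of_nonneg_right h1 (by positivity)
      _ = K * x^(β-1) * u⁻¹ := by ring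
  have hrint2 : IntervalIntegrable (fun x : ℝ => K * x^(β-1) * u⁻¹) volume a b := by
    apply ContinuousOn.intervalIntegrable; rw [huIcc]
    exact (continuousOn_const.mul (hrpow_cont (β-1))).mul continuousOn_const
  have hint_val : ∫ x in a..b, x^(β-1) ≤ a^β / (-β) := by
    have h0 : (0:ℝ) ∉ uIcc a b := by
      rw [huIcc]; rintro ⟨h01, -⟩; linarith
    have hint : ∫ x in a..b, x^(β-1) = (b^(β-1+1) - a^(β-1+1))/(β-1+1) :=
      integral_rpow (Or.inr ⟨by intro hcc; exact hβ0.ne (by linarith), h0⟩)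
    have hee : β - 1 + 1 = β := by ring
    rw [hee] at hint
    rw [hint]
    have hbβ : (0:ℝ) ≤ b^β := Real.rpow_nonneg hb0.le _
    have heq : (b^β - a^β)/β = (a^β - b^β)/(-β) := by
      rw [div_eq_div_iff hβ0.ne hnb.ne']; ring
    rw [heq, div_le_div_iff₀ hnb hnb]
    nlinarith
  have hIbound : ‖∫ x in a..b, ((Fd x:ℝ):ℂ) * g x‖ ≤ K * (a^β / (-β)) * u⁻¹ := by
    calc ‖∫ x in a..b, ((Fd x:ℝ):ℂ) * g x‖ ≤ ∫ x in a..b, ‖((Fd x:ℝ):ℂ) * g x‖ :=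
        intervalIntegral.norm_integral_le_integral_norm hab
      _ ≤ ∫ x in a..b, K * x^(β-1) * u⁻¹ :=
        intervalIntegral.integral_mono_on hab iFdg.norm hrint2 hFd_norm
      _ = (K * u⁻¹) * ∫ x in a..b, x^(β-1) := by
          rw [← intervalIntegral.integral_const_mul]
          congr 1; funext x; ring
      _ ≤ K * (a^β/(-β)) * u⁻¹ := by
          have := mul_le_mul_of_nonneg_left hint_val
            (by positivity : (0:ℝ) ≤ K * u⁻¹)
          calc (K * u⁻¹) * ∫ x in a..b, x^(β-1) ≤ (K * u⁻¹) * (a^β/(-β)) := this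
            _ = K * (a^β/(-β)) * u⁻¹ := by ring
  -- bound a^β * u⁻¹ ≤ X
  have haX : a^β * u⁻¹ ≤ X := by
    have h6 : a^β ≤ (u⁻¹)^β := Real.rpow_le_rpow_of_nonpos (inv_pos.mpr hu) hau hβ0.le
    have h7 : (u⁻¹ : ℝ)^β = u^(-β) := by
      rw [Real.inv_rpow hu.le, ← Real.rpow_neg hu.le]
    have h8 : u^(-β) * u⁻¹ = X := by
      rw [hX, show u⁻¹ = u^(-1:ℝ) from (Real.rpow_neg_one u).symm,
        ← Real.rpow_add hu]
      ring_nf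
    calc a^β * u⁻¹ ≤ u^(-β) * u⁻¹ := by
          apply mul_le_mul_of_nonneg_right _ (by positivity)
          rw [← h7]; exact h6
      _ = X := h8
  have part2 : ‖∫ x in a..b, F x * e x‖ ≤ (1 + K/(-β)) * X := by
    rw [key]
    have step1 : ‖-(F a * g a) - ∫ x in a..b, ((Fd x:ℝ):ℂ) * g x‖
        ≤ ‖F a * g a‖ + ‖∫ x in a..b, ((Fd x:ℝ):ℂ) * g x‖ := by
      refine (norm_sub_le _ _).trans ?_
      rw [norm_neg]
    refine step1.trans ?_
    have step2 : ‖F a * g a‖ ≤ a^β * u⁻¹ := by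
      rw [norm_mul, hnorm_g]
      exact mul_le_mul_of_nonneg_right hFa_norm (by positivity)
    calc ‖F a * g a‖ + ‖∫ x in a..b, ((Fd x:ℝ):ℂ) * g x‖
        ≤ a^β * u⁻¹ + K * (a^β/(-β)) * u⁻¹ := add_le_add step2 hIbound
      _ = (1 + K/(-β)) * (a^β * u⁻¹) := by ring
      _ ≤ (1 + K/(-β)) * X := by
          apply mul_le_mul_of_nonneg_left haX
          positivity
  -- part 1 : the integral over (0, a]
  have hFnorm : ∀ s : ℝ, 0 < s → ‖F s‖ ≤ s ^ β := by
    intro s hs0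
    rw [hF_def, Complex.norm_real, Real.norm_eq_abs, abs_mul, abs_of_nonneg (hΨ0 s),
      abs_of_nonneg (Real.rpow_nonneg hs0.le _)]
    nlinarith [hΨ1 s hs0, Real.rpow_nonneg hs0.le β, hΨ0 s]
  have hGcontOn : ∀ (S : Set ℝ), (∀ x ∈ S, 0 < x) → ContinuousOn (fun s => F s * e s) S := by
    intro S hS
    apply ContinuousOn.mul _ he_cont.continuousOn
    apply Complex.continuous_ofReal.comp_continuousOn
    apply ContinuousOn.mul hΨcont.continuousOn
    intro x hx
    exact (Real.continuousAt_rpow_const x β (Or.inl (hS x hx).ne')).continuousWithinAt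
  have hrint1 : IntegrableOn (fun s : ℝ => s ^ β) (Ioc (0:ℝ) a) :=
    (intervalIntegral.intervalIntegrable_rpow' (a := 0) (b := a) (by linarith : (-1:ℝ) < β)).1
  have hInt1 : IntegrableOn (fun s => F s * e s) (Ioc (0:ℝ) a) := by
    refine Integrable.mono' hrint1
      ((hGcontOn _ (fun x hx => hx.1)).aestronglyMeasurable measurableSet_Ioc) ?_
    rw [MeasureTheory.ae_restrict_iff' measurableSet_Ioc]
    filter_upwards with s hs
    rw [norm_mul, hnorm_e, mul_one]
    exact hFnorm s hs.1
  have hpart1 : ‖∫ s in Ioc (0:ℝ) a, F s * e s‖ ≤ (1 + X)/(β+1) := by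
    have hval : ∫ s in Ioc (0:ℝ) a, (s:ℝ)^β = a^(β+1)/(β+1) := by
      rw [← intervalIntegral.integral_of_le ha0.le, integral_rpow (Or.inl hβ1),
        Real.zero_rpow (by linarith : β+1 ≠ 0)]
      ring
    have hnum : a^(β+1) ≤ 1 + X := by
      rcases le_total (1/4 : ℝ) u⁻¹ with h | h
      · have haa : a = u⁻¹ := max_eq_right h
        rw [haa]
        have hXX : (u⁻¹:ℝ)^(β+1) = X := by
          rw [Real.inv_rpow hu.le, ← Real.rpow_neg hu.le, hX]; ring_nf
        rw [hXX]; linarith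
      · have haa : a = 1/4 := max_eq_left h
        rw [haa]
        have h1 : ((1:ℝ)/4)^(β+1) ≤ 1 :=
          Real.rpow_le_one (by norm_num) (by norm_num) (by linarith)
        linarith
    calc ‖∫ s in Ioc (0:ℝ) a, F s * e s‖ ≤ ∫ s in Ioc (0:ℝ) a, ‖F s * e s‖ :=
        norm_integral_le_integral_norm _
      _ ≤ ∫ s in Ioc (0:ℝ) a, (s:ℝ)^β := by
          apply setIntegral_mono_on hInt1.norm hrint1 measurableSet_Ioc
          intro s hs
          rw [norm_mul, hnorm_e, mul_one]
          exact hFnorm s hs.1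
      _ = a^(β+1)/(β+1) := hval
      _ ≤ (1 + X)/(β+1) := by gcongr
  -- splitting the integral
  have hInt2 : IntegrableOn (fun s => F s * e s) (Ioc a b) :=
    ((hGcontOn (Icc a b) (fun x hx => lt_of_lt_of_le ha0 hx.1)).integrableOn_Icc).mono_set
      Ioc_subset_Icc_self
  have hzeroIoi : ∀ s ∈ Ioi b, F s * e s = 0 := by
    intro s hs
    have h0 : Ψ ν s = 0 := hΨtop s (le_trans hb2 (le_of_lt hs))
    simp [hF_def, h0]
  have hInt3 : IntegrableOn (fun s => F s * e s) (Ioi b) := by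
    rw [integrableOn_congr_fun hzeroIoi measurableSet_Ioi]
    exact integrableOn_zero
  have hIntIoia : IntegrableOn (fun s => F s * e s) (Ioi a) := by
    rw [← Ioc_union_Ioi_eq_Ioi hab]
    exact hInt2.union hInt3
  have hsplit : ∫ s in Ioi (0:ℝ), F s * e s
      = (∫ s in Ioc (0:ℝ) a, F s * e s) + ∫ s in Ioi a, F s * e s := by
    rw [← setIntegral_union (Ioc_disjoint_Ioi le_rfl) measurableSet_Ioi hInt1 hIntIoia,
      Ioc_union_Ioi_eq_Ioi ha0.le]
  have hsplit2 : ∫ s in Ioi a, F s * e s = ∫ x in a..b, F x * e x := by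
    rw [← Ioc_union_Ioi_eq_Ioi hab,
      setIntegral_union (Ioc_disjoint_Ioi le_rfl) measurableSet_Ioi hInt2 hInt3,
      setIntegral_eq_zero_of_forall_eq_zero hzeroIoi, add_zero,
      intervalIntegral.integral_of_le hab]
  -- final assembly
  have hgoal_eq : (∫ s in Ioi (0:ℝ),
      ((Ψ ν s * s ^ β : ℝ) : ℂ) * Complex.exp (Complex.I * ((u * s : ℝ) : ℂ)))
      = ∫ s in Ioi (0:ℝ), F s * e s := rfl
  rw [hgoal_eq, hsplit, hsplit2]
  have hKβ : 0 ≤ K/(-β) := by positivity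
  calc ‖(∫ s in Ioc (0:ℝ) a, F s * e s) + ∫ x in a..b, F x * e x‖
      ≤ ‖∫ s in Ioc (0:ℝ) a, F s * e s‖ + ‖∫ x in a..b, F x * e x‖ := norm_add_le _ _
    _ ≤ (1 + X)/(β+1) + (1 + K/(-β)) * X := add_le_add hpart1 part2
    _ ≤ (1/(β+1) + 1 + K/(-β)) * (1 + X) := by
        have hexp : (1 + X)/(β+1) = (1/(β+1)) * (1 + X) := by ring
        rw [hexp]
        nlinarith [hX0, hKβ]
end
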